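/- arXiv:math/0311045 — 2 statements merged into one kernel-verified Lean document; each statement's English description precedes it below -/
import Mathlib

section
/- Let G = (V,E) be a finite acyclic digraph and μ an ε-admissible probability measure on {0,1}^V, with η = 1 − ε. Let μ̃ be the pushforward of μ under the coordinatewise bit-flip ω ↦ (1 − ω(i))_{i∈V}. Then μ̃ stochastically dominates the product Bernoulli measure π_η^V; equivalently, μ is stochastically dominated by π_ε^V. -/
open Finset

open Classical in
/-- Probability of the event `P` under the (finitely supported) measure `μ`. -/
noncomputable def Pr {Ω : Type*} [Fintype Ω] (μ : Ω → ℝ) (P : Ω → Prop) : ℝ :=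
  ∑ ω : Ω, if P ω then μ ω else 0

/-- `μ` is ε-admissible for the digraph with edge relation `E` on `V`. -/
def IsAdmissible {V : Type*} [Fintype V] [DecidableEq V] (E : V → V → Prop) (ε : ℝ)
    (μ : (V → Bool) → ℝ) : Prop :=
  ∀ i : V, ∀ Y Y' : Finset V, Disjoint Y Y' →
    (∀ j ∈ Y, ¬ Relation.ReflTransGen E i j) →
    (∀ j ∈ Y', ¬ Relation.ReflTransGen E i j) →
    0 < Pr μ (fun ω => (∀ j ∈ Y, ω j = true) ∧ (∀ j ∈ Y', ω j = false)) →
    Pr μ (fun ω => ω i = true ∧ (∀ j ∈ Y, ω j = true) ∧ (∀ j ∈ Y', ω j = false)) ≤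
      ε * Pr μ (fun ω => (∀ j ∈ Y, ω j = true) ∧ (∀ j ∈ Y', ω j = false))

/-- The product Bernoulli measure `π_p` on `{0,1}^V`. -/
noncomputable def bernoulliProd {V : Type*} [Fintype V] (p : ℝ) (ω : V → Bool) : ℝ :=
  ∏ i : V, if ω i then p else 1 - p

/-!
Interpolate between `μ` and `π_ε` through the hybrid measures `hybrid ε μ S`, which make the
coordinates in `S` independent Bernoulli(ε) and keep the law of `μ` on the coordinates off `S`.
Adding to `S` a vertex `i` all of whose descendants already lie in `S` is a monotone step: given
the coordinates off `S ∪ {i}`, a set avoiding `Γ*(i)`, admissibility bounds the conditional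
probability of `ω i = true` under `μ` by `ε`, its conditional probability after the step.
Adding the vertices one at a time, each after all of its descendants (a linear extension of the
reachability order, read backwards), leads from `hybrid ε μ ∅ = μ` to `hybrid ε μ univ = π_ε`.
The claim about the flipped measure follows because bit-flip reverses the order and maps `π_ε`
to `π_{1-ε}`.
-/

open Function Relation

section StochasticOrder

variable {Ω : Type*} [Fintype Ω]

def StochDominated [Preorder Ω] (μ ν : Ω → ℝ) : Prop :=
  ∀ f : Ω → ℝ, Monotone f → ∑ ω, μ ω * f ω ≤ ∑ ω, ν ω * f ω

theorem StochDominated.refl [Preorder Ω] (μ : Ω → ℝ) : StochDominated μ μ :=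
  fun _ _ => le_rfl

theorem StochDominated.trans [Preorder Ω] {μ ν ρ : Ω → ℝ} (h₁ : StochDominated μ ν)
    (h₂ : StochDominated ν ρ) : StochDominated μ ρ :=
  fun f hf => (h₁ f hf).trans (h₂ f hf)

theorem StochDominated.comp_compl [BooleanAlgebra Ω] {μ ν : Ω → ℝ} (h : StochDominated μ ν) :
    StochDominated (ν ∘ compl) (μ ∘ compl) := by
  intro f hf
  have hg : Monotone fun ω => -f ωᶜ := fun a b hab => neg_le_neg (hf (compl_le_compl hab))
  have reindex (g : Ω → ℝ) : ∑ ω, g ωᶜ = ∑ ω, g ω :=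
    Equiv.sum_comp (compl_involutive.toPerm _) g
  simpa [← reindex fun ω => _ * f ω] using h _ hg

end StochasticOrder

section Probability

variable {Ω : Type*} [Fintype Ω] {μ : Ω → ℝ}

theorem Pr_congr {P Q : Ω → Prop} (h : ∀ ω, P ω ↔ Q ω) : Pr μ P = Pr μ Q :=
  congrArg _ (funext fun ω => propext (h ω))

theorem Pr_nonneg (hμ : ∀ ω, 0 ≤ μ ω) (P : Ω → Prop) : 0 ≤ Pr μ P :=
  sum_nonneg fun ω _ => by split <;> simp [hμ ω]

theorem Pr_mono (hμ : ∀ ω, 0 ≤ μ ω) {P Q : Ω → Prop} (h : ∀ ω, P ω → Q ω) : Pr μ P ≤ Pr μ Q :=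
  sum_le_sum fun ω _ => by split_ifs <;> simp_all

theorem Pr_eq_Pr_and_add_Pr_and_not (P Q : Ω → Prop) :
    Pr μ P = Pr μ (fun ω => P ω ∧ Q ω) + Pr μ (fun ω => P ω ∧ ¬ Q ω) := by
  simp only [Pr, ← sum_add_distrib]
  refine sum_congr rfl fun ω _ => ?_
  by_cases hP : P ω <;> by_cases hQ : Q ω <;> simp [hP, hQ]

end Probability

theorem exists_mem_forall_not_transGen {V : Type*} [Finite V] {E : V → V → Prop}
    (hE : ∀ i, ¬ TransGen E i i) {S : Set V} (hS : S.Nonempty) :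
    ∃ i ∈ S, ∀ x ∈ S, ¬ TransGen E x i :=
  haveI : Std.Irrefl (TransGen E) := ⟨hE⟩
  (Finite.wellFounded_of_trans_of_irrefl _).has_min S hS

section Configurations

variable {V : Type*} [Fintype V] [DecidableEq V]

theorem sum_eq_sum_filter_add_update {M : Type*} [AddCommMonoid M] (i : V)
    (g : (V → Bool) → M) :
    ∑ ω, g ω = ∑ ω with ω i = false, (g ω + g (update ω i true)) := by
  rw [sum_add_distrib, ← sum_filter_add_sum_filter_not univ (fun ω => ω i = false)]
  congr 1
  refine sum_nbij' (update · i false) (update · i true) ?_ ?_ ?_ ?_ ?_ <;>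
    intro ω hω <;> simp_all [update_idem]
  rw [← hω, update_eq_self]

noncomputable def marginalOff (μ : (V → Bool) → ℝ) (S : Finset V) (ω : V → Bool) : ℝ :=
  Pr μ fun τ => ∀ j ∉ S, τ j = ω j

variable {μ : (V → Bool) → ℝ}

theorem marginalOff_empty (ω : V → Bool) : marginalOff μ ∅ ω = μ ω := by
  simp [marginalOff, Pr, ← funext_iff]

theorem marginalOff_univ (ω : V → Bool) : marginalOff μ univ ω = ∑ τ, μ τ := by
  simp [marginalOff, Pr]

theorem marginalOff_update_of_mem {S : Finset V} {i : V} (hi : i ∈ S) (ω : V → Bool)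
    (b : Bool) : marginalOff μ S (update ω i b) = marginalOff μ S ω :=
  Pr_congr fun τ => forall₂_congr fun j hj => by
    rw [update_of_ne (ne_of_mem_of_not_mem hi hj).symm]

theorem marginalOff_update {S : Finset V} {i : V} (hi : i ∉ S) (ω : V → Bool) (b : Bool) :
    marginalOff μ S (update ω i b) = Pr μ fun τ => τ i = b ∧ ∀ j ∉ insert i S, τ j = ω j := by
  refine Pr_congr fun τ => ⟨fun h => ⟨by simpa using h i hi, fun j hj => ?_⟩, fun h j hj => ?_⟩
  · rw [mem_insert, not_or] at hj
    simpa [hj.1] using h j hj.2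
  · by_cases hji : j = i
    · simp [hji, h.1]
    · simpa [hji] using h.2 j (by simp [hji, hj])

theorem marginalOff_insert {S : Finset V} {i : V} (hi : i ∉ S) (ω : V → Bool) :
    marginalOff μ (insert i S) ω =
      marginalOff μ S (update ω i true) + marginalOff μ S (update ω i false) := by
  rw [marginalOff_update hi, marginalOff_update hi, marginalOff,
    Pr_eq_Pr_and_add_Pr_and_not _ fun τ => τ i = true]
  simp only [Bool.not_eq_true, and_comm]

theorem forall_notMem_eq_iff (T : Finset V) (ω τ : V → Bool) :
    (∀ j ∉ T, τ j = ω j) ↔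
      (∀ j ∈ {j ∈ Tᶜ | ω j = true}, τ j = true) ∧ ∀ j ∈ {j ∈ Tᶜ | ω j = false}, τ j = false := by
  refine ⟨fun h => ⟨fun j hj => ?_, fun j hj => ?_⟩, fun h j hj => ?_⟩
  · simp_all
  · simp_all
  · cases hω : ω j
    · exact h.2 j (by simp [hj, hω])
    · exact h.1 j (by simp [hj, hω])

theorem IsAdmissible.pr_true_and_le_marginalOff {E : V → V → Prop} {ε : ℝ}
    (hadm : IsAdmissible E ε μ) (hμ : ∀ ω, 0 ≤ μ ω) {i : V} {T : Finset V}
    (hT : ∀ j ∉ T, ¬ ReflTransGen E i j) (ω : V → Bool) :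
    Pr μ (fun τ => τ i = true ∧ ∀ j ∉ T, τ j = ω j) ≤ ε * marginalOff μ T ω := by
  rcases (Pr_nonneg hμ _ : 0 ≤ marginalOff μ T ω).eq_or_lt with hzero | hpos
  · calc _ ≤ marginalOff μ T ω := Pr_mono hμ fun τ h => h.2
      _ = ε * marginalOff μ T ω := by rw [marginalOff, ← hzero, mul_zero]
  · simp only [marginalOff, forall_notMem_eq_iff T ω] at hpos ⊢
    have hTc : ∀ b, ∀ j ∈ {j ∈ Tᶜ | ω j = b}, ¬ ReflTransGen E i j :=
      fun b j hj => hT j (mem_compl.1 (mem_filter.1 hj).1)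
    exact hadm i _ _ (disjoint_filter.2 fun j _ h => by simp [h]) (hTc true) (hTc false) hpos

noncomputable def hybrid (ε : ℝ) (μ : (V → Bool) → ℝ) (S : Finset V) (ω : V → Bool) : ℝ :=
  (∏ j ∈ S, if ω j then ε else 1 - ε) * marginalOff μ S ω

theorem hybrid_empty (ε : ℝ) : hybrid ε μ ∅ = μ :=
  funext fun ω => by simp [hybrid, marginalOff_empty]

theorem hybrid_univ (hμ : ∑ ω, μ ω = 1) (ε : ℝ) : hybrid ε μ univ = bernoulliProd ε :=
  funext fun ω => by simp [hybrid, marginalOff_univ, hμ, bernoulliProd]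

theorem hybrid_stochDominated_insert {E : V → V → Prop} {ε : ℝ} (hε0 : 0 ≤ ε) (hε1 : ε ≤ 1)
    (hμ : ∀ ω, 0 ≤ μ ω) (hadm : IsAdmissible E ε μ) {S : Finset V} {i : V} (hi : i ∉ S)
    (hdesc : ∀ j, TransGen E i j → j ∈ S) :
    StochDominated (hybrid ε μ S) (hybrid ε μ (insert i S)) := by
  intro f hf
  rw [sum_eq_sum_filter_add_update i, sum_eq_sum_filter_add_update i]
  refine sum_le_sum fun ω hω => ?_
  replace hω : ω i = false := (mem_filter.1 hω).2
  set P := ∏ j ∈ S, if ω j then ε else 1 - ε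
  set A := marginalOff μ S (update ω i true)
  set B := marginalOff μ S ω
  have hP : 0 ≤ P := prod_nonneg fun j _ => by split <;> linarith
  have hPt : (∏ j ∈ S, if update ω i true j then ε else 1 - ε) = P :=
    prod_congr rfl fun j hj => by rw [update_of_ne (ne_of_mem_of_not_mem hj hi)]
  have hAB : marginalOff μ (insert i S) ω = A + B := by
    rw [marginalOff_insert hi, ← hω, update_eq_self]
  have hA : A ≤ ε * (A + B) := by
    rw [← hAB, show A = _ from marginalOff_update hi ω true]
    refine hadm.pr_true_and_le_marginalOff hμ (fun j hj hij => hj ?_) ω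
    rcases reflTransGen_iff_eq_or_transGen.1 hij with rfl | hij
    exacts [mem_insert_self j S, mem_insert_of_mem (hdesc j hij)]
  have hf' : f ω ≤ f (update ω i true) := hf (le_update_iff.2 ⟨le_top, fun _ _ => le_rfl⟩)
  have hω' : hybrid ε μ (insert i S) ω = (1 - ε) * P * (A + B) := by
    rw [hybrid, prod_insert hi, hω, hAB, if_neg Bool.false_ne_true, mul_assoc]
  have hωt : hybrid ε μ (insert i S) (update ω i true) = ε * P * (A + B) := by
    rw [hybrid, prod_insert hi, update_self, hPt,
      marginalOff_update_of_mem (mem_insert_self i S), hAB]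
    simp
  rw [hω', hωt, hybrid, hybrid, hPt]
  -- the gain is `P * (ε * (A + B) - A) * (f (update ω i true) - f ω)`
  linear_combination mul_nonneg hP (mul_nonneg (sub_nonneg.2 hA) (sub_nonneg.2 hf'))

theorem stochDominated_hybrid {E : V → V → Prop} (hE : ∀ i, ¬ TransGen E i i) {ε : ℝ}
    (hε0 : 0 ≤ ε) (hε1 : ε ≤ 1) (hμ : ∀ ω, 0 ≤ μ ω) (hadm : IsAdmissible E ε μ)
    (S : Finset V) (hS : ∀ a ∈ S, ∀ b, TransGen E a b → b ∈ S) :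
    StochDominated μ (hybrid ε μ S) := by
  induction S using Finset.strongInduction with
  | H S ih =>
    rcases S.eq_empty_or_nonempty with rfl | hne
    · rw [hybrid_empty]
      exact StochDominated.refl μ
    obtain ⟨i, hiS, hmin⟩ := exists_mem_forall_not_transGen hE (coe_nonempty.2 hne)
    have hsub : ∀ a ∈ S, ∀ b, TransGen E a b → b ∈ S.erase i := fun a ha b hab =>
      mem_erase.2 ⟨by rintro rfl; exact hmin a ha hab, hS a ha b hab⟩
    rw [← insert_erase hiS]
    exact (ih _ (erase_ssubset hiS) fun a ha => hsub a (mem_of_mem_erase ha)).trans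
      (hybrid_stochDominated_insert hε0 hε1 hμ hadm (notMem_erase i S) (hsub i hiS))

end Configurations

theorem bernoulliProd_comp_compl {V : Type*} [Fintype V] (p : ℝ) :
    (bernoulliProd p : (V → Bool) → ℝ) ∘ compl = bernoulliProd (1 - p) :=
  funext fun ω => prod_congr rfl fun j _ => by cases h : ω j <;> simp [h]

/-- If `μ` is ε-admissible for a finite acyclic digraph and `η = 1 − ε`, then the
bit-flipped measure `μ̃` stochastically dominates `π_η`; equivalently, `μ` is
stochastically dominated by `π_ε`. -/
theorem admissible_stochDom {V : Type*} [Fintype V] [DecidableEq V]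
    (E : V → V → Prop) (hacyclic : ∀ i : V, ¬ Relation.TransGen E i i)
    (ε η : ℝ) (hη : η = 1 - ε) (hε0 : 0 ≤ ε) (hε1 : ε ≤ 1)
    (μ : (V → Bool) → ℝ) (hpos : ∀ ω, 0 ≤ μ ω) (hsum : ∑ ω, μ ω = 1)
    (hadm : IsAdmissible E ε μ) :
    (∀ f : (V → Bool) → ℝ, Monotone f →
      ∑ ω, bernoulliProd η ω * f ω ≤ ∑ ω, μ (fun i => !ω i) * f ω) ∧
    (∀ f : (V → Bool) → ℝ, Monotone f →
      ∑ ω, μ ω * f ω ≤ ∑ ω, bernoulliProd ε ω * f ω) := by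
  have hdom : StochDominated μ (bernoulliProd ε) := by
    simpa only [hybrid_univ hsum] using
      stochDominated_hybrid hacyclic hε0 hε1 hpos hadm univ fun _ _ b _ => mem_univ b
  have hflip := hdom.comp_compl
  rw [bernoulliProd_comp_compl, ← hη] at hflip
  exact ⟨hflip, hdom⟩
end

section
/- Let G = (V,E) be a finite acyclic digraph in which every vertex has out-degree at most Δ ≥ 1, and let μ ∈ W_η^G with ε := 1−η ≤ Δ^Δ/(Δ+1)^{Δ+1}. Then μ stochastically dominates the product Bernoulli measure π_ρ^V, where ρ = (1 − ε^{1/(Δ+1)}/Δ^{Δ/(Δ+1)}) · (1 − (εΔ)^{1/(Δ+1)}). -/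
open Finset

/-- `μ ∈ W_η^G`: for every `i` and all disjoint `Y, Y' ⊆ V \ N̄(i)` (with `N̄(i)`
the closed out-neighborhood of `i`) such that the conditioning event has positive
probability, `P(X_i = 1 | ⋀_{j∈Y}(X_j=1) ∧ ⋀_{j∈Y'}(X_j=0)) ≥ η`. -/
def MemW {V : Type*} [Fintype V] [DecidableEq V] (E : V → V → Prop) (η : ℝ)
    (μ : (V → Bool) → ℝ) : Prop :=
  ∀ i : V, ∀ Y Y' : Finset V, Disjoint Y Y' →
    (∀ j ∈ Y, j ≠ i ∧ ¬ E i j) → (∀ j ∈ Y', j ≠ i ∧ ¬ E i j) →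
    0 < Pr μ (fun ω => (∀ j ∈ Y, ω j = true) ∧ (∀ j ∈ Y', ω j = false)) →
    η * Pr μ (fun ω => (∀ j ∈ Y, ω j = true) ∧ (∀ j ∈ Y', ω j = false)) ≤
      Pr μ (fun ω => ω i = true ∧ (∀ j ∈ Y, ω j = true) ∧ (∀ j ∈ Y', ω j = false))

/-!
On an acyclic digraph, take a set `S` closed under out-edges and a vertex `i ∈ S` with no
in-neighbour in `S`. Every vertex outside `S` lies outside `N̄(i)`, so conditionally on the
configuration off `S` we still have `X_i = 1` with probability at least `η`. Revealing the
vertices of `V` one such source at a time couples `μ` above `π_η`; hence `μ ⪰ π_η`, and the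
theorem follows because `0 ≤ ρ ≤ 1 - ε = η`.
-/

lemma exists_source_of_acyclic {V : Type*} [Finite V] {E : V → V → Prop}
    (hacyclic : ∀ i, ¬ Relation.TransGen E i i) {S : Finset V} (hS : S.Nonempty) :
    ∃ i ∈ S, ∀ j ∈ S, ¬ E j i := by
  have : IsTrans V (Relation.TransGen E) := ⟨fun _ _ _ => Relation.TransGen.trans⟩
  have : Std.Irrefl (Relation.TransGen E) := ⟨hacyclic⟩
  obtain ⟨i, hi, hmin⟩ := (Finite.wellFounded_of_trans_of_irrefl (Relation.TransGen E)).has_min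
    (S : Set V) hS
  exact ⟨i, hi, fun j hj hE => hmin j hj (Relation.TransGen.single hE)⟩

lemma Pr_eq_sum_of_iff {Ω : Type*} [Fintype Ω] (μ : Ω → ℝ) {P : Ω → Prop} {s : Finset Ω}
    (hP : ∀ ω, P ω ↔ ω ∈ s) : Pr μ P = ∑ ω ∈ s, μ ω := by
  classical
  simp only [Pr, hP, sum_ite_mem, univ_inter]

lemma mul_add_mul_le_of_coupling {p A₁ A₀ F₁ F₀ B₁ B₀ : ℝ} (hA : p * (A₁ + A₀) ≤ A₁)
    (hF : F₀ ≤ F₁) (h₁ : A₁ * F₁ ≤ B₁) (h₀ : A₀ * F₀ ≤ B₀) :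
    (A₁ + A₀) * (p * F₁ + (1 - p) * F₀) ≤ B₁ + B₀ := by
  nlinarith [mul_le_mul_of_nonneg_right hA (sub_nonneg.2 hF)]

section Cylinder

variable {V : Type*} [Fintype V] [DecidableEq V]

def cylinder (S : Finset V) (σ : V → Bool) : Finset (V → Bool) :=
  univ.filter fun ω => ∀ j ∉ S, ω j = σ j

@[simp]
lemma mem_cylinder {S : Finset V} {σ ω : V → Bool} :
    ω ∈ cylinder S σ ↔ ∀ j ∉ S, ω j = σ j := by
  simp [cylinder]

lemma cylinder_empty (σ : V → Bool) : cylinder ∅ σ = {σ} := by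
  ext ω
  simp [funext_iff]

lemma cylinder_univ (σ : V → Bool) : cylinder univ σ = univ := by
  ext ω
  simp

lemma filter_cylinder_eq {S : Finset V} {i : V} (hi : i ∈ S) (σ : V → Bool) (b : Bool) :
    (cylinder S σ).filter (fun ω => ω i = b) = cylinder (S.erase i) (Function.update σ i b) := by
  ext ω
  simp only [mem_filter, mem_cylinder, mem_erase, not_and_or, not_not]
  constructor
  · rintro ⟨hout, rfl⟩ j (rfl | hj)
    · simp
    · rw [Function.update_of_ne (ne_of_mem_of_not_mem hi hj).symm, hout j hj]
  · intro h
    refine ⟨fun j hj => ?_, by simpa using h i (Or.inl rfl)⟩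
    rw [h j (Or.inr hj), Function.update_of_ne (ne_of_mem_of_not_mem hi hj).symm]

lemma sum_cylinder_eq_add {M : Type*} [AddCommMonoid M] {S : Finset V} {i : V} (hi : i ∈ S)
    (σ : V → Bool) (g : (V → Bool) → M) :
    ∑ ω ∈ cylinder S σ, g ω =
      ∑ ω ∈ cylinder (S.erase i) (Function.update σ i true), g ω +
        ∑ ω ∈ cylinder (S.erase i) (Function.update σ i false), g ω := by
  rw [← filter_cylinder_eq hi, ← filter_cylinder_eq hi,
    ← sum_filter_add_sum_filter_not _ (fun ω => ω i = true)]
  simp only [Bool.not_eq_true]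

def bernoulliProdOn (S : Finset V) (p : ℝ) (ω : V → Bool) : ℝ :=
  ∏ j ∈ S, if ω j then p else 1 - p

omit [Fintype V] [DecidableEq V] in
lemma bernoulliProdOn_nonneg (S : Finset V) {p : ℝ} (hp0 : 0 ≤ p) (hp1 : p ≤ 1)
    (ω : V → Bool) : 0 ≤ bernoulliProdOn S p ω :=
  prod_nonneg fun j _ => by split_ifs <;> linarith

omit [Fintype V] in
lemma bernoulliProdOn_update_of_notMem {S : Finset V} {i : V} (hi : i ∉ S) (p : ℝ)
    (ω : V → Bool) (b : Bool) :
    bernoulliProdOn S p (Function.update ω i b) = bernoulliProdOn S p ω :=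
  prod_congr rfl fun j hj => by rw [Function.update_of_ne (ne_of_mem_of_not_mem hj hi)]

lemma sum_cylinder_bernoulliProdOn_mul {S : Finset V} {i : V} (hi : i ∈ S) (σ : V → Bool)
    (p : ℝ) (f : (V → Bool) → ℝ) :
    ∑ ω ∈ cylinder S σ, bernoulliProdOn S p ω * f ω =
      p * ∑ ω ∈ cylinder (S.erase i) (Function.update σ i true),
          bernoulliProdOn (S.erase i) p ω * f ω +
        (1 - p) * ∑ ω ∈ cylinder (S.erase i) (Function.update σ i false),
          bernoulliProdOn (S.erase i) p ω * f ω := by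
  have hsplit : ∀ b, ∀ ω ∈ cylinder (S.erase i) (Function.update σ i b),
      bernoulliProdOn S p ω * f ω =
        (if b then p else 1 - p) * (bernoulliProdOn (S.erase i) p ω * f ω) := by
    intro b ω hω
    rw [← filter_cylinder_eq hi, mem_filter] at hω
    rw [bernoulliProdOn, ← mul_prod_erase S _ hi, hω.2, mul_assoc, bernoulliProdOn]
  rw [sum_cylinder_eq_add hi, sum_congr rfl (hsplit true), sum_congr rfl (hsplit false),
    ← mul_sum, ← mul_sum]
  rfl

lemma sum_cylinder_update_false_le_true {T : Finset V} {i : V} (hi : i ∉ T) (σ : V → Bool)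
    {p : ℝ} (hp0 : 0 ≤ p) (hp1 : p ≤ 1) {f : (V → Bool) → ℝ} (hf : Monotone f) :
    ∑ ω ∈ cylinder T (Function.update σ i false), bernoulliProdOn T p ω * f ω ≤
      ∑ ω ∈ cylinder T (Function.update σ i true), bernoulliProdOn T p ω * f ω := by
  have hflip : ∀ b b' : Bool, ∀ ω ∈ cylinder T (Function.update σ i b),
      Function.update ω i b' ∈ cylinder T (Function.update σ i b') := by
    intro b b' ω hω
    rw [mem_cylinder] at hω ⊢
    intro j hj
    rcases eq_or_ne j i with rfl | hji
    · simp
    · simp [Function.update_of_ne hji, hω j hj]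
  have hback : ∀ b b' : Bool, ∀ ω ∈ cylinder T (Function.update σ i b),
      Function.update (Function.update ω i b') i b = ω := by
    intro b b' ω hω
    simpa using (mem_cylinder.1 hω i hi).symm
  calc ∑ ω ∈ cylinder T (Function.update σ i false), bernoulliProdOn T p ω * f ω
      ≤ ∑ ω ∈ cylinder T (Function.update σ i false),
          bernoulliProdOn T p (Function.update ω i true) * f (Function.update ω i true) := by
        refine sum_le_sum fun ω _ => ?_
        rw [bernoulliProdOn_update_of_notMem hi]
        exact mul_le_mul_of_nonneg_left (hf (le_update_iff.2 ⟨le_top, fun _ _ => le_rfl⟩))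
          (bernoulliProdOn_nonneg T hp0 hp1 ω)
    _ = ∑ ω ∈ cylinder T (Function.update σ i true), bernoulliProdOn T p ω * f ω :=
        sum_nbij' (fun ω => Function.update ω i true) (fun ω => Function.update ω i false)
          (hflip false true) (hflip true false) (hback false true) (hback true false)
          (fun _ _ => rfl)

lemma MemW.mul_sum_cylinder_le {E : V → V → Prop} {η : ℝ} {μ : (V → Bool) → ℝ}
    (hμ : MemW E η μ) (hpos : ∀ ω, 0 ≤ μ ω) {S : Finset V} {i : V} (hi : i ∈ S)
    (hout : ∀ j, E i j → j ∈ S) (σ : V → Bool) :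
    η * ∑ ω ∈ cylinder S σ, μ ω ≤
      ∑ ω ∈ cylinder (S.erase i) (Function.update σ i true), μ ω := by
  set Y := univ.filter fun j => j ∉ S ∧ σ j = true
  set Y' := univ.filter fun j => j ∉ S ∧ σ j = false
  have hcyl : ∀ ω, ((∀ j ∈ Y, ω j = true) ∧ ∀ j ∈ Y', ω j = false) ↔ ω ∈ cylinder S σ := by
    intro ω
    simp only [Y, Y', mem_filter, mem_univ, true_and, mem_cylinder]
    constructor
    · rintro ⟨h1, h0⟩ j hj
      cases hσ : σ j
      exacts [h0 j ⟨hj, hσ⟩, h1 j ⟨hj, hσ⟩]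
    · intro h
      exact ⟨fun j hj => (h j hj.1).trans hj.2, fun j hj => (h j hj.1).trans hj.2⟩
  have hcyl_i : ∀ ω, (ω i = true ∧ (∀ j ∈ Y, ω j = true) ∧ ∀ j ∈ Y', ω j = false) ↔
      ω ∈ cylinder (S.erase i) (Function.update σ i true) := by
    intro ω
    rw [← filter_cylinder_eq hi, mem_filter, hcyl, and_comm]
  have houtside : ∀ j ∈ Y ∪ Y', j ≠ i ∧ ¬ E i j := by
    intro j hj
    have hjS : j ∉ S := by simp only [Y, Y', mem_union, mem_filter] at hj; tauto
    exact ⟨ne_of_mem_of_not_mem hi hjS |>.symm, fun hE => hjS (hout j hE)⟩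
  have hdisj : Disjoint Y Y' := by
    simp only [Y, Y', disjoint_filter]
    intro j _ h1 h0
    simp [h1.2] at h0
  rcases (sum_nonneg fun ω (_ : ω ∈ cylinder S σ) => hpos ω).eq_or_lt with hzero | hmass
  · rw [← hzero, mul_zero]
    exact sum_nonneg fun ω _ => hpos ω
  · have h := hμ i Y Y' hdisj (fun j hj => houtside j (mem_union_left _ hj))
      (fun j hj => houtside j (mem_union_right _ hj)) (by rwa [Pr_eq_sum_of_iff μ hcyl])
    rwa [Pr_eq_sum_of_iff μ hcyl, Pr_eq_sum_of_iff μ hcyl_i] at h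

theorem sum_cylinder_mul_le_of_memW {E : V → V → Prop}
    (hacyclic : ∀ i, ¬ Relation.TransGen E i i) {η p : ℝ} (hp0 : 0 ≤ p) (hp1 : p ≤ 1)
    (hpη : p ≤ η) {μ : (V → Bool) → ℝ} (hpos : ∀ ω, 0 ≤ μ ω) (hμ : MemW E η μ)
    {f : (V → Bool) → ℝ} (hf : Monotone f) (S : Finset V) (hS : ∀ a ∈ S, ∀ j, E a j → j ∈ S)
    (σ : V → Bool) :
    (∑ ω ∈ cylinder S σ, μ ω) * ∑ ω ∈ cylinder S σ, bernoulliProdOn S p ω * f ω ≤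
      ∑ ω ∈ cylinder S σ, μ ω * f ω := by
  induction S using Finset.strongInduction generalizing σ with | H S ih => ?_
  rcases S.eq_empty_or_nonempty with rfl | hne
  · simp [cylinder_empty, bernoulliProdOn]
  obtain ⟨i, hi, hsource⟩ := exists_source_of_acyclic hacyclic hne
  have hS' : ∀ a ∈ S.erase i, ∀ j, E a j → j ∈ S.erase i := fun a ha j hE =>
    mem_erase.2 ⟨fun hji => hsource a (mem_of_mem_erase ha) (hji ▸ hE),
      hS a (mem_of_mem_erase ha) j hE⟩
  have ih' := fun b => ih (S.erase i) (erase_ssubset hi) hS' (Function.update σ i b)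
  rw [sum_cylinder_eq_add hi, sum_cylinder_eq_add hi (g := fun ω => μ ω * f ω),
    sum_cylinder_bernoulliProdOn_mul hi]
  refine mul_add_mul_le_of_coupling ?_
    (sum_cylinder_update_false_le_true (notMem_erase i S) σ hp0 hp1 hf) (ih' true) (ih' false)
  calc p * (_ + _) = p * ∑ ω ∈ cylinder S σ, μ ω := by rw [sum_cylinder_eq_add hi]
    _ ≤ η * ∑ ω ∈ cylinder S σ, μ ω :=
        mul_le_mul_of_nonneg_right hpη (sum_nonneg fun ω _ => hpos ω)
    _ ≤ _ := hμ.mul_sum_cylinder_le hpos hi (hS i hi) σ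

theorem sum_bernoulliProd_mul_le_of_memW {E : V → V → Prop}
    (hacyclic : ∀ i, ¬ Relation.TransGen E i i) {η p : ℝ} (hp0 : 0 ≤ p) (hp1 : p ≤ 1)
    (hpη : p ≤ η) {μ : (V → Bool) → ℝ} (hpos : ∀ ω, 0 ≤ μ ω) (hsum : ∑ ω, μ ω = 1)
    (hμ : MemW E η μ) {f : (V → Bool) → ℝ} (hf : Monotone f) :
    ∑ ω, bernoulliProd p ω * f ω ≤ ∑ ω, μ ω * f ω := by
  simpa [cylinder_univ, hsum, bernoulliProdOn, bernoulliProd] using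
    sum_cylinder_mul_le_of_memW hacyclic hp0 hp1 hpη hpos hμ hf univ (by simp) fun _ => false

lemma MemW.le_one [Nonempty V] {E : V → V → Prop} {η : ℝ} {μ : (V → Bool) → ℝ}
    (hμ : MemW E η μ) (hpos : ∀ ω, 0 ≤ μ ω) (hsum : ∑ ω, μ ω = 1) : η ≤ 1 := by
  obtain ⟨i⟩ := ‹Nonempty V›
  have htotal := Pr_eq_sum_of_iff μ (P := fun ω => (∀ j ∈ (∅ : Finset V), ω j = true) ∧
    ∀ j ∈ (∅ : Finset V), ω j = false) (s := univ) (by simp)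
  have h := hμ i ∅ ∅ (disjoint_empty_left _) (by simp) (by simp)
    (by rw [htotal, hsum]; exact one_pos)
  rw [htotal, hsum, mul_one, Pr_eq_sum_of_iff μ (s := univ.filter fun ω => ω i = true) (by simp)]
    at h
  exact h.trans (hsum ▸ sum_le_univ_sum_of_nonneg hpos)

lemma sum_bernoulliProd_mul_eq_of_isEmpty [IsEmpty V] (p : ℝ) {μ : (V → Bool) → ℝ}
    (hsum : ∑ ω, μ ω = 1) (f : (V → Bool) → ℝ) :
    ∑ ω, bernoulliProd p ω * f ω = ∑ ω, μ ω * f ω := by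
  simp only [Fintype.sum_unique] at hsum ⊢
  simp [bernoulliProd, hsum]

end Cylinder

section Rate

noncomputable def lssRate (Δ : ℕ) (ε : ℝ) : ℝ :=
  (1 - ε ^ ((1 : ℝ) / (Δ + 1)) / (Δ : ℝ) ^ ((Δ : ℝ) / (Δ + 1))) *
    (1 - (ε * Δ) ^ ((1 : ℝ) / (Δ + 1)))

variable (Δ : ℕ) {ε : ℝ}

lemma natCast_pow_self_pos : (0 : ℝ) < (Δ : ℝ) ^ Δ := by
  rcases Nat.eq_zero_or_pos Δ with rfl | hΔ
  · simp
  · positivity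

lemma mul_le_one_of_le_pow_div_pow (hε : ε ≤ (Δ : ℝ) ^ Δ / ((Δ : ℝ) + 1) ^ (Δ + 1)) :
    ε * Δ ≤ 1 := by
  calc ε * Δ ≤ (Δ : ℝ) ^ Δ / ((Δ : ℝ) + 1) ^ (Δ + 1) * Δ :=
        mul_le_mul_of_nonneg_right hε (Nat.cast_nonneg Δ)
    _ = ((Δ : ℝ) / (Δ + 1)) ^ (Δ + 1) := by rw [div_pow, pow_succ (Δ : ℝ) Δ]; ring
    _ ≤ 1 := pow_le_one₀ (by positivity) (div_le_one_of_le₀ (by linarith) (by positivity))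

lemma rpow_div_rpow_pow_succ (hε0 : 0 ≤ ε) :
    (ε ^ ((1 : ℝ) / (Δ + 1)) / (Δ : ℝ) ^ ((Δ : ℝ) / (Δ + 1))) ^ (Δ + 1) = ε / (Δ : ℝ) ^ Δ := by
  have hΔ1 : (Δ : ℝ) + 1 ≠ 0 := by positivity
  rw [div_pow, ← Real.rpow_mul_natCast hε0, ← Real.rpow_mul_natCast (Nat.cast_nonneg Δ)]
  push_cast
  rw [div_mul_cancel₀ _ hΔ1, div_mul_cancel₀ _ hΔ1, Real.rpow_one, Real.rpow_natCast]

lemma rpow_div_rpow_nonneg (hε0 : 0 ≤ ε) :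
    0 ≤ ε ^ ((1 : ℝ) / (Δ + 1)) / (Δ : ℝ) ^ ((Δ : ℝ) / (Δ + 1)) :=
  div_nonneg (Real.rpow_nonneg hε0 _) (Real.rpow_nonneg (Nat.cast_nonneg Δ) _)

lemma le_rpow_div_rpow (hε0 : 0 ≤ ε) (hε : ε ≤ (Δ : ℝ) ^ Δ / ((Δ : ℝ) + 1) ^ (Δ + 1)) :
    ε ≤ ε ^ ((1 : ℝ) / (Δ + 1)) / (Δ : ℝ) ^ ((Δ : ℝ) / (Δ + 1)) := by
  rw [← pow_le_pow_iff_left₀ hε0 (rpow_div_rpow_nonneg Δ hε0) (Nat.succ_ne_zero Δ),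
    rpow_div_rpow_pow_succ Δ hε0, le_div_iff₀ (natCast_pow_self_pos Δ)]
  calc ε ^ (Δ + 1) * (Δ : ℝ) ^ Δ = ε * (ε * Δ) ^ Δ := by ring
    _ ≤ ε * 1 := mul_le_mul_of_nonneg_left
        (pow_le_one₀ (by positivity) (mul_le_one_of_le_pow_div_pow Δ hε)) hε0
    _ = ε := mul_one ε

lemma rpow_div_rpow_le_one (hε0 : 0 ≤ ε) (hε : ε ≤ (Δ : ℝ) ^ Δ / ((Δ : ℝ) + 1) ^ (Δ + 1)) :
    ε ^ ((1 : ℝ) / (Δ + 1)) / (Δ : ℝ) ^ ((Δ : ℝ) / (Δ + 1)) ≤ 1 := by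
  have hΔΔ := natCast_pow_self_pos Δ
  rw [← pow_le_one_iff_of_nonneg (rpow_div_rpow_nonneg Δ hε0) (Nat.succ_ne_zero Δ),
    rpow_div_rpow_pow_succ Δ hε0]
  exact div_le_one_of_le₀ (hε.trans (div_le_self hΔΔ.le (one_le_pow₀ (by linarith)))) hΔΔ.le

lemma lssRate_nonneg (hε0 : 0 ≤ ε) (hε : ε ≤ (Δ : ℝ) ^ Δ / ((Δ : ℝ) + 1) ^ (Δ + 1)) :
    0 ≤ lssRate Δ ε :=
  mul_nonneg (sub_nonneg.2 (rpow_div_rpow_le_one Δ hε0 hε))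
    (sub_nonneg.2 (Real.rpow_le_one (by positivity) (mul_le_one_of_le_pow_div_pow Δ hε)
      (by positivity)))

lemma lssRate_le_one_sub (hε0 : 0 ≤ ε) (hε : ε ≤ (Δ : ℝ) ^ Δ / ((Δ : ℝ) + 1) ^ (Δ + 1)) :
    lssRate Δ ε ≤ 1 - ε := by
  have hβ0 : 0 ≤ (ε * Δ) ^ ((1 : ℝ) / (Δ + 1)) := Real.rpow_nonneg (by positivity) _
  calc lssRate Δ ε ≤ 1 - ε ^ ((1 : ℝ) / (Δ + 1)) / (Δ : ℝ) ^ ((Δ : ℝ) / (Δ + 1)) :=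
        mul_le_of_le_one_right (sub_nonneg.2 (rpow_div_rpow_le_one Δ hε0 hε)) (by linarith)
    _ ≤ 1 - ε := by linarith [le_rpow_div_rpow Δ hε0 hε]

end Rate

theorem lss_directed_general {V : Type*} [Fintype V] [DecidableEq V]
    (E : V → V → Prop)
    (hacyclic : ∀ i : V, ¬ Relation.TransGen E i i)
    (Δ : ℕ)
    (η ε : ℝ) (hε : ε = 1 - η)
    (hεbound : ε ≤ (Δ : ℝ) ^ Δ / ((Δ : ℝ) + 1) ^ (Δ + 1))
    (μ : (V → Bool) → ℝ) (hpos : ∀ ω, 0 ≤ μ ω) (hsum : ∑ ω, μ ω = 1)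
    (hμ : MemW E η μ)
    (f : (V → Bool) → ℝ) (hf : Monotone f) :
    ∑ ω, bernoulliProd ((1 - ε ^ ((1 : ℝ) / (Δ + 1)) / (Δ : ℝ) ^ ((Δ : ℝ) / (Δ + 1))) *
        (1 - (ε * Δ) ^ ((1 : ℝ) / (Δ + 1)))) ω * f ω ≤
      ∑ ω, μ ω * f ω := by
  rcases isEmpty_or_nonempty V with hV | hV
  · exact (sum_bernoulliProd_mul_eq_of_isEmpty _ hsum f).le
  have hε0 : 0 ≤ ε := by linarith [hμ.le_one hpos hsum]
  have hρε := lssRate_le_one_sub Δ hε0 hεbound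
  exact sum_bernoulliProd_mul_le_of_memW hacyclic (lssRate_nonneg Δ hε0 hεbound)
    (by linarith) (by linarith) hpos hsum hμ hf

/-- Directed-graph analogue of the Liggett–Schonmann–Stacey theorem: if every
vertex of the finite acyclic digraph `G` has out-degree at most `Δ ≥ 1` and
`μ ∈ W_η^G` with `ε = 1 − η ≤ Δ^Δ/(Δ+1)^{Δ+1}`, then `μ` stochastically
dominates the product Bernoulli measure `π_ρ` with
`ρ = (1 − ε^{1/(Δ+1)}/Δ^{Δ/(Δ+1)})(1 − (εΔ)^{1/(Δ+1)})`. -/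
theorem lss_directed {V : Type*} [Fintype V] [DecidableEq V]
    (E : V → V → Prop) [DecidableRel E]
    (hacyclic : ∀ i : V, ¬ Relation.TransGen E i i)
    (Δ : ℕ) (hΔ : 1 ≤ Δ)
    (hdeg : ∀ i : V, (Finset.univ.filter (fun j => E i j)).card ≤ Δ)
    (η ε : ℝ) (hε : ε = 1 - η)
    (hεbound : ε ≤ (Δ : ℝ) ^ Δ / ((Δ : ℝ) + 1) ^ (Δ + 1))
    (μ : (V → Bool) → ℝ) (hpos : ∀ ω, 0 ≤ μ ω) (hsum : ∑ ω, μ ω = 1)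
    (hμ : MemW E η μ)
    (f : (V → Bool) → ℝ) (hf : Monotone f) :
    ∑ ω, bernoulliProd ((1 - ε ^ ((1 : ℝ) / (Δ + 1)) / (Δ : ℝ) ^ ((Δ : ℝ) / (Δ + 1))) *
        (1 - (ε * Δ) ^ ((1 : ℝ) / (Δ + 1)))) ω * f ω ≤
      ∑ ω, μ ω * f ω :=
  lss_directed_general E hacyclic Δ η ε hε hεbound μ hpos hsum hμ f hf
end
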